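/- arXiv:0809.3644 — 5 statements merged into one kernel-verified Lean document; each statement's English description precedes it below -/
import Mathlib

section
/- Let X be a Banach space over 𝕜 (𝕜 = ℝ or ℂ) and let T be a bounded linear operator on X. Then Re V(T) ⊆ {0} (i.e., T is skew-hermitian) if and only if ‖exp(ρT)‖ ≤ 1 for every ρ ∈ ℝ, where exp(ρT) = Σ_{n=0}^∞ (ρT)ⁿ/n! is the operator exponential. -/
/-!
If `Re V(T) = 0`, then for a unit vector `u` and a norming functional `f` of `u` we get
`‖u + h T u‖ ≥ Re f (u + h T u) = 1` for every real `h`. Along a solution of `c' = T c` this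
says that `‖c‖` has nonnegative lower right Dini derivative, so `‖c‖` does not decrease. Running
`t ↦ exp ((1 - t) ρ T) x`, a solution for the skew-hermitian operator `-ρ T`, from `t = 0` to
`t = 1` gives `‖exp (ρ T) x‖ ≤ ‖x‖`.

Conversely, if `f x = 1 = ‖f‖ = ‖x‖` and `‖exp (ρ T)‖ ≤ 1`, then `ρ ↦ Re f (exp (ρ T) x)` attains
its maximum `1` at `ρ = 0`, where its derivative is `Re f (T x)`.
-/

/-- The numerical range of a bounded linear operator `T` on a Banach space `X` over `𝕜`:
the set of values `f (T x)` where `‖x‖ = 1`, `‖f‖ = 1` and `f x = 1`. -/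
def numericalRange (𝕜 : Type*) {X : Type*} [RCLike 𝕜] [NormedAddCommGroup X]
    [NormedSpace 𝕜 X] (T : X →L[𝕜] X) : Set 𝕜 :=
  {lam | ∃ (x : X) (f : X →L[𝕜] 𝕜), ‖x‖ = 1 ∧ ‖f‖ = 1 ∧ f x = 1 ∧ lam = f (T x)}

open RCLike Set Filter Topology NormedSpace

theorem image_le_of_eventually_sub_mul_le_right {φ : ℝ → ℝ} {a b : ℝ} (hab : a ≤ b)
    (hφ : ContinuousOn φ (Icc a b))
    (hslope : ∀ t ∈ Ico a b, ∀ r > 0, ∀ᶠ z in 𝓝[>] t, φ t - r * (z - t) ≤ φ z) :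
    φ a ≤ φ b := by
  have key := image_le_of_liminf_slope_right_le_deriv_boundary (f := fun t => -φ t)
    (B := fun _ => -φ a) (B' := fun _ => 0) hφ.neg le_rfl continuousOn_const
    (fun t _ => hasDerivWithinAt_const _ _ _) ?_ ⟨hab, le_rfl⟩
  · simpa using key
  intro t ht r hr
  refine Eventually.frequently ?_
  filter_upwards [hslope t ht (r / 2) (half_pos hr), self_mem_nhdsWithin] with z hz (hzt : t < z)
  rw [slope_def_field, div_lt_iff₀ (sub_pos.2 hzt)]
  nlinarith

theorem HasDerivAt.re_comp_ofReal {𝕜 : Type*} [RCLike 𝕜] {g : 𝕜 → 𝕜} {g' : 𝕜} {t : ℝ}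
    (h : HasDerivAt g g' t) : HasDerivAt (fun s : ℝ => re (g s)) (re g') t :=
  (reCLM.hasFDerivAt.comp_hasDerivAt t
    ((h.hasFDerivAt.restrictScalars ℝ).comp_hasDerivAt t (ofRealCLM (K := 𝕜)).hasDerivAt)).congr_deriv
    (by simp)

section

variable {𝕜 X : Type*} [RCLike 𝕜] [NormedAddCommGroup X] [NormedSpace 𝕜 X]

def IsSkewHermitian (T : X →L[𝕜] X) : Prop :=
  ∀ lam ∈ numericalRange 𝕜 T, re lam = 0

theorem hasDerivAt_exp_smul_apply [CompleteSpace X] (T : X →L[𝕜] X) (x : X) (z : 𝕜) :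
    HasDerivAt (fun w : 𝕜 => exp (w • T) x) (T (exp (z • T) x)) z :=
  (ContinuousLinearMap.apply 𝕜 X x).hasFDerivAt.comp_hasDerivAt z (hasDerivAt_exp_smul_const' T z)

namespace IsSkewHermitian

variable {T : X →L[𝕜] X}

theorem ofReal_smul (hT : IsSkewHermitian T) (r : ℝ) : IsSkewHermitian ((r : 𝕜) • T) := by
  rintro _ ⟨x, f, hx, hf, hfx, rfl⟩
  simp [hT _ ⟨x, f, hx, hf, hfx, rfl⟩]

theorem re_apply_eq_zero (hT : IsSkewHermitian T) {f : StrongDual 𝕜 X} (hf : ‖f‖ = 1)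
    {u : X} (hfu : f u = ‖u‖) : re (f (T u)) = 0 := by
  rcases eq_or_ne u 0 with rfl | hu
  · simp
  have hu' : (‖u‖ : 𝕜) ≠ 0 := ofReal_ne_zero.2 (norm_ne_zero_iff.2 hu)
  have hx : ‖(‖u‖⁻¹ : 𝕜) • u‖ = 1 := by
    rw [norm_smul, norm_inv, norm_ofReal, abs_norm, inv_mul_cancel₀ (norm_ne_zero_iff.2 hu)]
  have := hT _ ⟨_, f, hx, hf, by rw [map_smul, hfu, smul_eq_mul, inv_mul_cancel₀ hu'], rfl⟩
  rw [map_smul, map_smul, smul_eq_mul, ← ofReal_inv, re_ofReal_mul] at this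
  exact (mul_eq_zero.1 this).resolve_left (inv_ne_zero (norm_ne_zero_iff.2 hu))

theorem norm_le_norm_add_smul_apply (hT : IsSkewHermitian T) (u : X) (h : ℝ) :
    ‖u‖ ≤ ‖u + (h : 𝕜) • T u‖ := by
  rcases eq_or_ne u 0 with rfl | hu
  · simp
  obtain ⟨f, hf, hfu⟩ := exists_dual_vector 𝕜 u (norm_ne_zero_iff.2 hu)
  calc ‖u‖ = re (f (u + (h : 𝕜) • T u)) := by
        rw [map_add, map_smul, map_add, hfu, smul_eq_mul, re_ofReal_mul,
          hT.re_apply_eq_zero hf hfu, ofReal_re, mul_zero, add_zero]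
    _ ≤ ‖f (u + (h : 𝕜) • T u)‖ := re_le_norm _
    _ ≤ ‖u + (h : 𝕜) • T u‖ := by simpa [hf] using f.le_opNorm (u + (h : 𝕜) • T u)

theorem norm_le_norm_of_hasDerivAt (hT : IsSkewHermitian T) {c : 𝕜 → X}
    (hc : ∀ s : ℝ, HasDerivAt c (T (c s)) s) {t : ℝ} (ht : 0 ≤ t) : ‖c 0‖ ≤ ‖c t‖ := by
  have key := image_le_of_eventually_sub_mul_le_right (φ := fun s : ℝ => ‖c s‖) ht ?_ ?_
  · simpa using key
  · exact fun s _ =>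
      ((hc s).continuousAt.comp continuous_ofReal.continuousAt).norm.continuousWithinAt
  intro s _ r hr
  have hlin := ((hasDerivAt_iff_isLittleO.1 (hc s)).comp_tendsto
    (continuous_ofReal.tendsto s)).def hr
  filter_upwards [nhdsWithin_le_nhds hlin, self_mem_nhdsWithin] with z hz (hsz : s < z)
  have hdist : ‖(z : 𝕜) - s‖ = z - s := by
    rw [← ofReal_sub, norm_ofReal, abs_of_pos (sub_pos.2 hsz)]
  simp only [Function.comp_apply, hdist, sub_sub] at hz
  have hstep := hT.norm_le_norm_add_smul_apply (c s) (z - s)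
  rw [ofReal_sub] at hstep
  linarith [norm_le_norm_add_norm_sub (c z) (c s + ((z : 𝕜) - s) • T (c s))]

theorem norm_exp_smul_le_one [CompleteSpace X] (hT : IsSkewHermitian T) (ρ : ℝ) :
    ‖exp ((ρ : 𝕜) • T)‖ ≤ 1 := by
  refine ContinuousLinearMap.opNorm_le_bound _ zero_le_one fun x => ?_
  have hc : ∀ s : ℝ, HasDerivAt (fun w : 𝕜 => exp ((1 - w) • (ρ : 𝕜) • T) x)
      ((((-ρ : ℝ) : 𝕜) • T) (exp ((1 - (s : 𝕜)) • (ρ : 𝕜) • T) x)) s := fun s =>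
    ((hasDerivAt_exp_smul_apply _ x _).scomp (s : 𝕜) ((hasDerivAt_id _).const_sub 1)).congr_deriv
      (by simp)
  simpa using (hT.ofReal_smul (-ρ)).norm_le_norm_of_hasDerivAt hc zero_le_one

end IsSkewHermitian

theorem isSkewHermitian_of_norm_exp_smul_le_one [CompleteSpace X] {T : X →L[𝕜] X}
    (hT : ∀ ρ : ℝ, ‖exp ((ρ : 𝕜) • T)‖ ≤ 1) : IsSkewHermitian T := by
  rintro _ ⟨x, f, hx, hf, hfx, rfl⟩
  have hderiv : HasDerivAt (fun ρ : ℝ => re (f (exp ((ρ : 𝕜) • T) x))) (re (f (T x))) 0 := by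
    simpa using
      (f.hasFDerivAt.comp_hasDerivAt _ (hasDerivAt_exp_smul_apply T x ((0 : ℝ) : 𝕜))).re_comp_ofReal
  refine IsLocalMax.hasDerivAt_eq_zero (Eventually.of_forall fun ρ => ?_) hderiv
  calc re (f (exp ((ρ : 𝕜) • T) x)) ≤ ‖f‖ * (‖exp ((ρ : 𝕜) • T)‖ * ‖x‖) :=
        (re_le_norm _).trans (f.le_opNorm_of_le ((exp ((ρ : 𝕜) • T)).le_opNorm x))
    _ ≤ 1 := by rw [hf, hx, one_mul, mul_one]; exact hT ρ
    _ = re (f (exp (((0 : ℝ) : 𝕜) • T) x)) := by simp [hfx]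

end

/-- An operator `T` is skew-hermitian (`Re V(T) ⊆ {0}`) if and only if
`‖exp (ρ T)‖ ≤ 1` for every real `ρ`. -/
theorem skewHermitian_iff_norm_exp_le_one
    {𝕜 X : Type*} [RCLike 𝕜] [NormedAddCommGroup X] [NormedSpace 𝕜 X] [CompleteSpace X]
    (T : X →L[𝕜] X) :
    (∀ lam ∈ numericalRange 𝕜 T, RCLike.re lam = 0) ↔
      ∀ ρ : ℝ, ‖NormedSpace.exp ((ρ : 𝕜) • T)‖ ≤ 1 :=
  ⟨IsSkewHermitian.norm_exp_smul_le_one, isSkewHermitian_of_norm_exp_smul_le_one⟩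
end

section
/- Let X be a nonzero Banach space over 𝕜 (𝕜 = ℝ or ℂ), T a bounded linear operator on X, and λ ∈ 𝕜 with |λ| = 1. If the operator λT satisfies the Daugavet equation ‖Id + λT‖ = 1 + ‖T‖, then ‖T‖ ∈ λ · closure(V(T)); that is, the scalar λ̄‖T‖ (complex conjugate of λ times ‖T‖) belongs to the closure of V(T). -/
/-!
Write `S = λT`. For `0 ≤ α ≤ 1` the Daugavet equation passes to `‖Id + αS‖ = 1 + α‖S‖`.
If `Re V(S) ≤ K`, testing `y - αSy` against a norming functional of `y` gives
`‖(Id - αS) y‖ ≥ (1 - αK) ‖y‖`, and since `(Id - αS)(Id + αS) = Id - α²S²` this yields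
`(1 - αK) ‖Id + αS‖ ≤ 1 + α²‖S‖²`. Comparing the two as `α → 0⁺` forces `K ≥ ‖S‖`,
so `sup Re V(S) = ‖S‖`. As `V(S)` lies in the disc of radius `‖S‖`, points of `V(S)` with
real part close to `‖S‖` are close to `‖S‖`, and `V(λT) = λ V(T)`.
-/

open RCLike Filter Topology Pointwise

theorem norm_ofReal_sub_sq_le {𝕜 : Type*} [RCLike 𝕜] {w : 𝕜} {r : ℝ} (hw : ‖w‖ ≤ r) :
    ‖(r : 𝕜) - w‖ ^ 2 ≤ 2 * r * (r - re w) := by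
  have hsq : ‖w‖ ^ 2 ≤ r ^ 2 := pow_le_pow_left₀ (norm_nonneg w) hw 2
  rw [norm_sq_eq_def] at hsq ⊢
  simp only [map_sub, ofReal_re, ofReal_im]
  nlinarith

section NormedSpace

variable {𝕜 E : Type*} [RCLike 𝕜] [SeminormedAddCommGroup E] [NormedSpace 𝕜 E]

theorem norm_add_ofReal_smul_of_norm_add_eq {u v : E} (h : ‖u + v‖ = ‖u‖ + ‖v‖) {t : ℝ}
    (ht₀ : 0 ≤ t) (ht₁ : t ≤ 1) : ‖u + (t : 𝕜) • v‖ = ‖u‖ + t * ‖v‖ := by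
  have hnorm : ∀ s : ℝ, 0 ≤ s → ‖(s : 𝕜) • v‖ = s * ‖v‖ := fun s hs => by
    rw [norm_smul, norm_ofReal, abs_of_nonneg hs]
  refine le_antisymm ((norm_add_le _ _).trans_eq (by rw [hnorm t ht₀])) ?_
  have hsplit : u + v = (u + (t : 𝕜) • v) + ((1 - t : ℝ) : 𝕜) • v := by
    rw [ofReal_sub, ofReal_one, sub_smul, one_smul]
    abel
  have := h ▸ hsplit ▸ norm_add_le (u + (t : 𝕜) • v) (((1 - t : ℝ) : 𝕜) • v)
  rw [hnorm _ (sub_nonneg.2 ht₁)] at this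
  linarith

theorem mul_norm_one_add_le_of_forall_mul_norm_le {A : E →L[𝕜] E} {c : ℝ}
    (hA : ∀ y, c * ‖y‖ ≤ ‖y - A y‖) : c * ‖1 + A‖ ≤ 1 + ‖A‖ ^ 2 := by
  rcases le_or_gt c 0 with hc | hc
  · exact (mul_nonpos_of_nonpos_of_nonneg hc (norm_nonneg _)).trans (by positivity)
  rw [mul_comm, ← le_div_iff₀ hc]
  refine ContinuousLinearMap.opNorm_le_bound _ (by positivity) fun x => ?_
  rw [div_mul_eq_mul_div, le_div_iff₀' hc]
  have hcomp : (1 + A) x - A ((1 + A) x) = x - A (A x) := by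
    simp only [add_apply, one_apply_eq_self, map_add]
    abel
  calc c * ‖(1 + A) x‖ ≤ ‖x - A (A x)‖ := hcomp ▸ hA _
    _ ≤ ‖x‖ + ‖A‖ * (‖A‖ * ‖x‖) :=
      (norm_sub_le _ _).trans (by gcongr; exact A.le_opNorm_of_le (A.le_opNorm x))
    _ = (1 + ‖A‖ ^ 2) * ‖x‖ := by ring

end NormedSpace

section NumericalRange

variable {𝕜 X : Type*} [RCLike 𝕜] [NormedAddCommGroup X] [NormedSpace 𝕜 X]

theorem numericalRange_smul (c : 𝕜) (T : X →L[𝕜] X) :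
    numericalRange 𝕜 (c • T) = c • numericalRange 𝕜 T := by
  ext z
  simp only [numericalRange, Set.mem_smul_set, smul_eq_mul, smul_apply, map_smul]
  constructor
  · rintro ⟨x, f, hx, hf, hfx, rfl⟩
    exact ⟨_, ⟨x, f, hx, hf, hfx, rfl⟩, rfl⟩
  · rintro ⟨_, ⟨x, f, hx, hf, hfx, rfl⟩, rfl⟩
    exact ⟨x, f, hx, hf, hfx, rfl⟩

theorem norm_le_opNorm_of_mem_numericalRange {T : X →L[𝕜] X} {z : 𝕜}
    (hz : z ∈ numericalRange 𝕜 T) : ‖z‖ ≤ ‖T‖ := by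
  obtain ⟨x, f, hx, hf, -, rfl⟩ := hz
  simpa [hx, hf] using f.le_opNorm_of_le (T.le_opNorm x)

theorem re_apply_le_mul_norm_of_forall_re_le {S : X →L[𝕜] X} {K : ℝ}
    (hV : ∀ z ∈ numericalRange 𝕜 S, re z ≤ K) {y : X} {f : X →L[𝕜] 𝕜} (hf : ‖f‖ = 1)
    (hfy : f y = ‖y‖) : re (f (S y)) ≤ K * ‖y‖ := by
  rcases eq_or_ne y 0 with rfl | hy
  · simp
  have hy' : (‖y‖ : 𝕜) ≠ 0 := ofReal_ne_zero.2 (norm_ne_zero_iff.2 hy)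
  have hmem : f (S ((‖y‖ : 𝕜)⁻¹ • y)) ∈ numericalRange 𝕜 S := by
    refine ⟨_, f, ?_, hf, ?_, rfl⟩
    · rw [norm_smul, norm_inv, norm_ofReal, abs_norm, inv_mul_cancel₀ (norm_ne_zero_iff.2 hy)]
    · rw [map_smul, smul_eq_mul, hfy, inv_mul_cancel₀ hy']
  have := hV _ hmem
  rw [map_smul, map_smul, smul_eq_mul, ← ofReal_inv, re_ofReal_mul,
    inv_mul_le_iff₀ (norm_pos_iff.2 hy)] at this
  linarith

theorem mul_norm_le_norm_sub_smul_apply_of_forall_re_le {S : X →L[𝕜] X} {K : ℝ}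
    (hV : ∀ z ∈ numericalRange 𝕜 S, re z ≤ K) {α : ℝ} (hα : 0 ≤ α) (y : X) :
    (1 - α * K) * ‖y‖ ≤ ‖y - ((α : 𝕜) • S) y‖ := by
  by_cases hy : ‖y‖ = 0
  · simp [hy]
  obtain ⟨f, hf, hfy⟩ := exists_dual_vector 𝕜 y hy
  have hSy := re_apply_le_mul_norm_of_forall_re_le hV hf hfy
  calc (1 - α * K) * ‖y‖ ≤ ‖y‖ - α * re (f (S y)) := by nlinarith
    _ = re (f (y - ((α : 𝕜) • S) y)) := by
      simp only [map_sub, smul_apply, map_smul, smul_eq_mul, hfy,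
        ofReal_re, re_ofReal_mul]
    _ ≤ ‖y - ((α : 𝕜) • S) y‖ :=
      (re_le_norm _).trans ((f.le_opNorm _).trans_eq (by rw [hf, one_mul]))

theorem exists_mem_numericalRange_lt_re_of_norm_one_add_eq {S : X →L[𝕜] X}
    (hS : ‖1 + S‖ = 1 + ‖S‖) {K : ℝ} (hK : K < ‖S‖) :
    ∃ z ∈ numericalRange 𝕜 S, K < re z := by
  by_contra! hV
  have hone : ‖(1 : X →L[𝕜] X)‖ = 1 :=
    le_antisymm ContinuousLinearMap.norm_id_le (by linarith [norm_add_le (1 : X →L[𝕜] X) S])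
  have hsmall : ∀ᶠ α in 𝓝[>] (0 : ℝ), α ≤ 1 ∧ α * K < 1 ∧ α * (‖S‖ * (‖S‖ + K)) < ‖S‖ - K :=
    have hα : Tendsto (fun α : ℝ => α) (𝓝[>] 0) (𝓝 0) := nhdsWithin_le_nhds
    (hα.eventually_le_const one_pos).and <|
      ((hα.mul_const K).eventually_lt_const (by simp)).and
        ((hα.mul_const _).eventually_lt_const (by simpa using hK))
  obtain ⟨α, ⟨hα₁, hαK, hαS⟩, hα₀ : 0 < α⟩ := (hsmall.and self_mem_nhdsWithin).exists
  have hlower : 1 + α * ‖S‖ ≤ ‖1 + (α : 𝕜) • S‖ :=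
    (norm_add_ofReal_smul_of_norm_add_eq (hone ▸ hS) hα₀.le hα₁).ge.trans_eq' (by rw [hone])
  have hupper := mul_norm_one_add_le_of_forall_mul_norm_le
    (mul_norm_le_norm_sub_smul_apply_of_forall_re_le hV hα₀.le)
  rw [norm_smul, norm_ofReal, abs_of_pos hα₀] at hupper
  nlinarith [mul_le_mul_of_nonneg_left hlower (sub_nonneg.2 hαK.le)]

end NumericalRange

theorem conj_smul_norm_mem_closure_numericalRange_of_daugavet_general
    {𝕜 X : Type*} [RCLike 𝕜] [NormedAddCommGroup X] [NormedSpace 𝕜 X]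
    (T : X →L[𝕜] X) (lam : 𝕜) (hlam : ‖lam‖ = 1)
    (hDE : ‖(1 : X →L[𝕜] X) + lam • T‖ = 1 + ‖T‖) :
    (starRingEnd 𝕜) lam * (‖T‖ : 𝕜) ∈ closure (numericalRange 𝕜 T) := by
  have hnorm : ‖lam • T‖ = ‖T‖ := by rw [norm_smul, hlam, one_mul]
  rw [Metric.mem_closure_iff]
  intro ε hε
  set δ := ε ^ 2 / (2 * ‖T‖ + 1)
  have hδ : 2 * ‖T‖ * δ < ε ^ 2 := by
    rw [mul_div_assoc', div_lt_iff₀ (by positivity)]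
    nlinarith
  obtain ⟨z, hz, hre⟩ := exists_mem_numericalRange_lt_re_of_norm_one_add_eq (hnorm ▸ hDE)
    (K := ‖T‖ - δ) (by rw [hnorm]; exact sub_lt_self _ (by positivity))
  obtain ⟨w, hw, rfl⟩ := numericalRange_smul lam T ▸ hz
  dsimp only at hz hre
  refine ⟨w, hw, ?_⟩
  have hdist : dist ((starRingEnd 𝕜) lam * ‖T‖) w = ‖(‖T‖ : 𝕜) - lam • w‖ := by
    rw [dist_eq_norm, ← one_mul ‖_ - w‖, ← hlam, ← norm_mul, mul_sub, ← mul_assoc, mul_conj,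
      hlam, smul_eq_mul, ofReal_one, one_pow, one_mul]
  have hsq := norm_ofReal_sub_sq_le (hnorm ▸ norm_le_opNorm_of_mem_numericalRange hz)
  rw [hdist, ← abs_of_pos hε, ← abs_norm, ← sq_lt_sq]
  nlinarith [mul_le_mul_of_nonneg_left hre.le (norm_nonneg T)]

/-- If `λ T` satisfies the Daugavet equation `‖Id + λT‖ = 1 + ‖T‖` for a modulus-one scalar `λ`,
then `conj λ * ‖T‖` belongs to the closure of the numerical range of `T`,
i.e. `‖T‖ ∈ λ • closure (V(T))`. -/
theorem conj_smul_norm_mem_closure_numericalRange_of_daugavet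
    {𝕜 X : Type*} [RCLike 𝕜] [NormedAddCommGroup X] [NormedSpace 𝕜 X] [CompleteSpace X]
    [Nontrivial X] (T : X →L[𝕜] X) (lam : 𝕜) (hlam : ‖lam‖ = 1)
    (hDE : ‖(1 : X →L[𝕜] X) + lam • T‖ = 1 + ‖T‖) :
    (starRingEnd 𝕜) lam * (‖T‖ : 𝕜) ∈ closure (numericalRange 𝕜 T) :=
  conj_smul_norm_mem_closure_numericalRange_of_daugavet_general T lam hlam hDE
end

section
/- Let Y and Z be Banach spaces over 𝕜 (𝕜 = ℝ or ℂ) with Y ≠ {0}, and let X = Y ⊕₁ Z be their ℓ₁-direct sum, i.e., the product Y × Z with norm ‖(y,z)‖ = ‖y‖ + ‖z‖. Given a bounded linear operator S on Y, define T on X by T(y,z) = (S y, 0). Then ‖T‖ = ‖S‖ and V(T) ⊆ { t·μ : t ∈ [0,1], μ ∈ V(S) }. -/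
lemma RCLike.eq_ofReal_of_norm_le_of_add_eq {𝕜 : Type*} [RCLike 𝕜] {z w : 𝕜} {r s : ℝ}
    (hz : ‖z‖ ≤ r) (hw : ‖w‖ ≤ s) (h : z + w = r + s) : z = r := by
  have hre : re z + re w = r + s := by simpa using congrArg re h
  have hz_re : ‖z‖ ≤ re z := by linarith [re_le_norm z, re_le_norm w]
  rw [norm_le_re_iff_eq_norm.mp hz_re, le_antisymm hz (by linarith [re_le_norm w, re_le_norm z])]

section NumericalRange

variable {𝕜 Y : Type*} [RCLike 𝕜] [NormedAddCommGroup Y] [NormedSpace 𝕜 Y]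

theorem exists_mem_numericalRange_of_apply_eq_norm (S : Y →L[𝕜] Y) {y : Y} (hy : y ≠ 0)
    {g : Y →L[𝕜] 𝕜} (hg : ‖g‖ ≤ 1) (hgy : g y = ‖y‖) :
    ∃ μ ∈ numericalRange 𝕜 S, g (S y) = ‖y‖ * μ := by
  have hy₀ : (‖y‖ : 𝕜) ≠ 0 := by simpa using hy
  set u : Y := (‖y‖ : 𝕜)⁻¹ • y
  have hu : ‖u‖ = 1 := by simp [u, norm_smul, hy]
  have hgu : g u = 1 := by simp [u, hgy, hy₀]
  have hg_one : ‖g‖ = 1 :=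
    le_antisymm hg (by simpa [hgu, hu] using g.le_opNorm u)
  refine ⟨g (S u), ⟨u, g, hu, hg_one, hgu, rfl⟩, ?_⟩
  simp [u, hy₀]

theorem numericalRange_nonempty [Nontrivial Y] (S : Y →L[𝕜] Y) :
    (numericalRange 𝕜 S).Nonempty := by
  obtain ⟨y, hy⟩ := exists_ne (0 : Y)
  obtain ⟨g, hg, hgy⟩ := exists_dual_vector 𝕜 y (norm_ne_zero_iff.mpr hy)
  obtain ⟨μ, hμ, -⟩ := exists_mem_numericalRange_of_apply_eq_norm S hy hg.le hgy
  exact ⟨μ, hμ⟩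

end NumericalRange

namespace WithLp

variable (p : ENNReal) (𝕜 : Type*) {Y : Type*} (Z : Type*) [RCLike 𝕜]
  [NormedAddCommGroup Y] [NormedSpace 𝕜 Y] [NormedAddCommGroup Z] [NormedSpace 𝕜 Z]

def inlL : Y →L[𝕜] WithLp p (Y × Z) :=
  (prodContinuousLinearEquiv p 𝕜 Y Z).symm.toContinuousLinearMap.comp
    (ContinuousLinearMap.inl 𝕜 Y Z)

@[simp]
lemma inlL_apply (y : Y) : inlL p 𝕜 Z y = toLp p (y, 0) := rfl

def extendByZero (S : Y →L[𝕜] Y) : WithLp p (Y × Z) →L[𝕜] WithLp p (Y × Z) :=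
  (inlL p 𝕜 Z).comp (S.comp (fstL p 𝕜 Y Z))

variable {p 𝕜 Z}

lemma extendByZero_apply (S : Y →L[𝕜] Y) (x : WithLp p (Y × Z)) :
    extendByZero p 𝕜 Z S x = toLp p (S x.fst, 0) := rfl

lemma norm_extendByZero [Fact (1 ≤ p)] (S : Y →L[𝕜] Y) : ‖extendByZero p 𝕜 Z S‖ = ‖S‖ := by
  refine le_antisymm ((extendByZero p 𝕜 Z S).opNorm_le_bound (norm_nonneg _) fun x => ?_)
    (S.opNorm_le_bound (norm_nonneg _) fun y => ?_)
  · calc ‖extendByZero p 𝕜 Z S x‖ = ‖S x.fst‖ := by simp [extendByZero_apply]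
      _ ≤ ‖S‖ * ‖x.fst‖ := S.le_opNorm _
      _ ≤ ‖S‖ * ‖x‖ := by gcongr; exact norm_fst_le Y x
  · calc ‖S y‖ = ‖(extendByZero p 𝕜 Z S (toLp p (y, 0))).fst‖ := rfl
      _ ≤ ‖extendByZero p 𝕜 Z S (toLp p (y, 0))‖ := norm_fst_le Y _
      _ ≤ ‖extendByZero p 𝕜 Z S‖ * ‖toLp p (y, (0 : Z))‖ := ContinuousLinearMap.le_opNorm _ _
      _ = ‖extendByZero p 𝕜 Z S‖ * ‖y‖ := by rw [norm_toLp_fst]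

lemma apply_toLp_fst_eq_norm_of_apply_eq_norm {f : WithLp 1 (Y × Z) →L[𝕜] 𝕜} (hf : ‖f‖ ≤ 1)
    {x : WithLp 1 (Y × Z)} (hfx : f x = ‖x‖) : f (toLp 1 (x.fst, 0)) = ‖x.fst‖ := by
  have hx : toLp 1 (x.fst, 0) + toLp 1 (0, x.snd) = x := by
    rw [← toLp_add]; simp only [Prod.mk_add_mk, add_zero, zero_add]; rfl
  refine RCLike.eq_ofReal_of_norm_le_of_add_eq (w := f (toLp 1 (0, x.snd))) (s := ‖x.snd‖) ?_ ?_ ?_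
  · simpa using f.le_of_opNorm_le hf (toLp 1 (x.fst, (0 : Z)))
  · simpa using f.le_of_opNorm_le hf (toLp 1 ((0 : Y), x.snd))
  · rw [← map_add, hx, hfx, prod_norm_eq_of_L1, RCLike.ofReal_add]

theorem numericalRange_extendByZero_subset [Nontrivial Y] (S : Y →L[𝕜] Y) :
    numericalRange 𝕜 (extendByZero 1 𝕜 Z S) ⊆
      {c : 𝕜 | ∃ t ∈ Set.Icc (0 : ℝ) 1, ∃ μ ∈ numericalRange 𝕜 S, c = (t : 𝕜) * μ} := by
  rintro _ ⟨x, f, hx, hf, hfx, rfl⟩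
  set g := f.comp (inlL 1 𝕜 Z)
  have hg : ‖g‖ ≤ 1 :=
    g.opNorm_le_bound zero_le_one fun y => by simpa [g, hf] using f.le_opNorm (toLp 1 (y, (0 : Z)))
  have hgx : g x.fst = ‖x.fst‖ := apply_toLp_fst_eq_norm_of_apply_eq_norm hf.le (by simp [hfx, hx])
  have ht : ‖x.fst‖ ≤ 1 := hx ▸ norm_fst_le Y x
  rcases eq_or_ne x.fst 0 with h0 | h0
  · obtain ⟨μ, hμ⟩ := numericalRange_nonempty S
    exact ⟨0, ⟨le_rfl, zero_le_one⟩, μ, hμ, by simp [extendByZero_apply, h0, Prod.mk_zero_zero]⟩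
  · obtain ⟨μ, hμ, hgμ⟩ := exists_mem_numericalRange_of_apply_eq_norm S h0 hg hgx
    exact ⟨‖x.fst‖, ⟨norm_nonneg _, ht⟩, μ, hμ, hgμ⟩

end WithLp

theorem norm_eq_and_numericalRange_subset_of_l1_sum_extension_general
    {𝕜 Y Z : Type*} [RCLike 𝕜] [NormedAddCommGroup Y] [NormedSpace 𝕜 Y]
    [NormedAddCommGroup Z] [NormedSpace 𝕜 Z] [Nontrivial Y]
    (S : Y →L[𝕜] Y) (T : WithLp 1 (Y × Z) →L[𝕜] WithLp 1 (Y × Z))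
    (hT : ∀ p : WithLp 1 (Y × Z),
      WithLp.equiv 1 (Y × Z) (T p) = (S (WithLp.equiv 1 (Y × Z) p).1, (0 : Z))) :
    ‖T‖ = ‖S‖ ∧
      numericalRange 𝕜 T ⊆
        {c : 𝕜 | ∃ t ∈ Set.Icc (0 : ℝ) 1, ∃ μ ∈ numericalRange 𝕜 S, c = (t : 𝕜) * μ} := by
  obtain rfl : T = WithLp.extendByZero 1 𝕜 Z S :=
    ContinuousLinearMap.ext fun x => (WithLp.equiv 1 (Y × Z)).injective (hT x)
  exact ⟨WithLp.norm_extendByZero S, WithLp.numericalRange_extendByZero_subset S⟩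

/-- Let `X = Y ⊕₁ Z` be the `ℓ₁`-direct sum of `Y` and `Z`, with `Y ≠ 0`. If `S ∈ L(Y)` and
`T ∈ L(X)` is given by `T (y, z) = (S y, 0)`, then `‖T‖ = ‖S‖` and
`V(T) ⊆ [0,1] ⬝ V(S)`. -/
theorem norm_eq_and_numericalRange_subset_of_l1_sum_extension
    {𝕜 Y Z : Type*} [RCLike 𝕜] [NormedAddCommGroup Y] [NormedSpace 𝕜 Y] [CompleteSpace Y]
    [NormedAddCommGroup Z] [NormedSpace 𝕜 Z] [CompleteSpace Z] [Nontrivial Y]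
    (S : Y →L[𝕜] Y) (T : WithLp 1 (Y × Z) →L[𝕜] WithLp 1 (Y × Z))
    (hT : ∀ p : WithLp 1 (Y × Z),
      WithLp.equiv 1 (Y × Z) (T p) = (S (WithLp.equiv 1 (Y × Z) p).1, (0 : Z))) :
    ‖T‖ = ‖S‖ ∧
      numericalRange 𝕜 T ⊆
        {c : 𝕜 | ∃ t ∈ Set.Icc (0 : ℝ) 1, ∃ μ ∈ numericalRange 𝕜 S, c = (t : 𝕜) * μ} :=
  norm_eq_and_numericalRange_subset_of_l1_sum_extension_general S T hT
end

section
/- Let Δ be a closed subset of [0,1] whose complement [0,1] \ Δ is dense in [0,1], and let E be a closed subspace of C(Δ,𝕜), 𝕜 = ℝ or ℂ. Then the subspace X = { f ∈ C([0,1],𝕜) : f|_Δ ∈ E } is a C-rich closed subspace of C([0,1],𝕜). -/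
set_option synthInstance.maxHeartbeats 1000000
set_option maxHeartbeats 1000000

/-- A closed subspace `X` of `C(K, 𝕜)` is C-rich if for every nonempty open set `U ⊆ K` and
every `ε > 0` there is a continuous function `h : K → [0,1]` of norm one with support inside `U`
whose distance to `X` is less than `ε`. -/
def CRich (𝕜 : Type*) [RCLike 𝕜] {K : Type*} [TopologicalSpace K] [CompactSpace K]
    (X : Submodule 𝕜 C(K, 𝕜)) : Prop :=
  ∀ U : Set K, IsOpen U → U.Nonempty → ∀ ε : ℝ, 0 < ε →
    ∃ h : C(K, ℝ), (∀ t, h t ∈ Set.Icc (0 : ℝ) 1) ∧ ‖h‖ = 1 ∧ tsupport ⇑h ⊆ U ∧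
      ∃ g ∈ X, ‖(⟨fun t => ((h t : ℝ) : 𝕜), RCLike.continuous_ofReal.comp h.continuous⟩
        : C(K, 𝕜)) - g‖ < ε

/-- Restriction to a subset `Δ ⊆ [0,1]`, as a linear map `C([0,1], 𝕜) →ₗ[𝕜] C(Δ, 𝕜)`. -/
def restrictLM (𝕜 : Type*) [RCLike 𝕜] (Δ : Set unitInterval) :
    C(unitInterval, 𝕜) →ₗ[𝕜] C(Δ, 𝕜) where
  toFun f := f.restrict Δ
  map_add' _ _ := rfl
  map_smul' _ _ := rfl

/-! `X` is the preimage of the closed subspace `E` under the continuous restriction map, hence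
closed. It even contains the bump functions that C-richness asks to approximate: since `Δ` is
closed with dense complement, every nonempty open `U` contains a nonempty open `V` disjoint from
`Δ`, and an Urysohn function of norm one supported in `V` vanishes on `Δ`, so it lies in `X`. -/

theorem exists_continuousMap_Icc_norm_eq_one_tsupport_subset {K : Type*} [TopologicalSpace K]
    [CompactSpace K] [R1Space K] {V : Set K} (hV : IsOpen V) (hne : V.Nonempty) :
    ∃ h : C(K, ℝ), (∀ t, h t ∈ Set.Icc (0 : ℝ) 1) ∧ ‖h‖ = 1 ∧ tsupport ⇑h ⊆ V := by
  obtain ⟨t₀, ht₀⟩ := hne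
  obtain ⟨h, hsupp, hone, hIcc⟩ := exists_tsupport_one_of_isOpen_isClosed hV
    isClosed_closure.isCompact isClosed_closure
    (isCompact_singleton.closure_subset_of_isOpen hV (Set.singleton_subset_iff.mpr ht₀))
  refine ⟨h, hIcc, le_antisymm ?_ ?_, hsupp⟩
  · refine (h.norm_le zero_le_one).mpr fun t => ?_
    rw [Real.norm_eq_abs, abs_le]
    exact ⟨by linarith [(hIcc t).1], (hIcc t).2⟩
  · calc (1 : ℝ) = ‖h t₀‖ := by rw [hone (subset_closure rfl)]; simp
      _ ≤ ‖h‖ := h.norm_coe_le_norm t₀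

theorem cRich_of_forall_exists_open_subset {𝕜 : Type*} [RCLike 𝕜] {K : Type*}
    [TopologicalSpace K] [CompactSpace K] [R1Space K] (X : Submodule 𝕜 C(K, 𝕜))
    (hX : ∀ U : Set K, IsOpen U → U.Nonempty →
      ∃ V ⊆ U, IsOpen V ∧ V.Nonempty ∧ ∀ f : C(K, 𝕜), (∀ t ∉ V, f t = 0) → f ∈ X) :
    CRich 𝕜 X := by
  intro U hU hUne ε hε
  obtain ⟨V, hVU, hV, hVne, hVX⟩ := hX U hU hUne
  obtain ⟨h, hIcc, hnorm, hsupp⟩ := exists_continuousMap_Icc_norm_eq_one_tsupport_subset hV hVne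
  refine ⟨h, hIcc, hnorm, hsupp.trans hVU, _, hVX _ fun t ht => ?_, by rwa [sub_self, norm_zero]⟩
  simp [image_eq_zero_of_notMem_tsupport fun h' => ht (hsupp h')]

theorem mem_comap_restrictLM_of_eqOn_zero {𝕜 : Type*} [RCLike 𝕜] {Δ : Set unitInterval}
    (E : Submodule 𝕜 C(Δ, 𝕜)) {f : C(unitInterval, 𝕜)} (hf : Set.EqOn f 0 Δ) :
    f ∈ E.comap (restrictLM 𝕜 Δ) := by
  have : restrictLM 𝕜 Δ f = 0 := by
    ext x
    exact hf x.2
  simp only [Submodule.mem_comap, this, E.zero_mem]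

/-- If `Δ ⊆ [0,1]` is closed with dense complement and `E` is a closed subspace of `C(Δ, 𝕜)`,
then `X = { f ∈ C([0,1], 𝕜) : f|_Δ ∈ E }` is a C-rich closed subspace of `C([0,1], 𝕜)`. -/
theorem isClosed_and_cRich_of_restriction_subspace
    {𝕜 : Type*} [RCLike 𝕜] (Δ : Set unitInterval) (hΔ : IsClosed Δ) (hdense : Dense Δᶜ)
    (E : Submodule 𝕜 C(Δ, 𝕜)) (hE : IsClosed (E : Set C(Δ, 𝕜))) :
    IsClosed ((E.comap (restrictLM 𝕜 Δ) : Submodule 𝕜 C(unitInterval, 𝕜)) :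
        Set C(unitInterval, 𝕜)) ∧
      CRich 𝕜 (E.comap (restrictLM 𝕜 Δ)) := by
  refine ⟨hE.preimage (ContinuousMap.continuous_restrict Δ),
    cRich_of_forall_exists_open_subset _ fun U hU hUne => ?_⟩
  refine ⟨U ∩ Δᶜ, Set.inter_subset_left, hU.inter hΔ.isOpen_compl,
    hdense.inter_open_nonempty U hU hUne, fun f hf => ?_⟩
  exact mem_comap_restrictLM_of_eqOn_zero E fun t ht => hf t fun h' => h'.2 ht
end

section
/- There exists a real Banach space X with the following two properties: (1) every nonzero dissipative bounded linear operator T on X fixes a copy of ℓ₁; (2) there is an infinite linearly independent family of finite-rank dissipative bounded linear operators on the dual X*. -/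
/-!
Take `X = C(K)` for the Cantor space `K = ℕ → Bool` and treat a functional `φ ∈ X*` as a measure
without using measure theory: its atom at `t` is `lim φ (𝟙 (cylinder t k))`, and its variation on
`A \ {t}` is a supremum over test functions supported in `A` and vanishing near `t`. This variation
is superadditive on disjoint sets, which forces it to tend to `0` on the cylinders around `t`;
everything else rests on that.

Each atom is an `L`-summand of `X*`, so `φ ↦ -φ({t}) δₜ` is a dissipative rank-one operator on
`X*`, and distinct points `t` give linearly independent ones.

For a dissipative `T ≠ 0` on `X`, testing dissipativity at `δₛ` shows that the diagonal
`d(s) = (T* δₛ)({s})` is `≤ 0` and that `|T g s| ≤ -d(s) ‖g‖` when `g s = 0`. Hence `d` does not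
vanish identically, and as `2 d(s) ≤ T 𝟙(cylinder s k) s`, `d ≤ -β` on some cylinder. Since the
off-diagonal variation is lower semicontinuous, Baire's theorem yields a smaller cylinder on which
it is `≤ β / 4` at every point, and this gives `‖T f‖ ≥ β / 2 ‖f‖` for `f` supported there. The
Rademacher functions on that cylinder span an isometric copy of `ℓ₁`.
-/

open Filter Topology PiNat Function

noncomputable section

local notation "δ" => ContinuousMap.evalCLM (M := ℝ) ℝ

lemma apply_le_norm_of_norm_le_one {E : Type*} [NormedAddCommGroup E] [NormedSpace ℝ E]
    (φ : StrongDual ℝ E) {g : E} (hg : ‖g‖ ≤ 1) : φ g ≤ ‖φ‖ :=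
  (le_abs_self _).trans (φ.unit_le_opNorm g hg)

section CompactSpace

variable {X : Type*} [TopologicalSpace X] [CompactSpace X]

lemma ContinuousMap.norm_sub_le_one_of_mem_Icc {f g : C(X, ℝ)} (hf : ∀ x, f x ∈ Set.Icc 0 1)
    (hg : ∀ x, g x ∈ Set.Icc 0 1) : ‖f - g‖ ≤ 1 :=
  (ContinuousMap.norm_le _ zero_le_one).mpr fun x => by
    obtain ⟨hf0, hf1⟩ := hf x; obtain ⟨hg0, hg1⟩ := hg x
    exact abs_le.mpr ⟨by simp; linarith, by simp; linarith⟩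

lemma ContinuousMap.exists_abs_apply_eq_norm [Nonempty X] (f : C(X, ℝ)) : ∃ s, |f s| = ‖f‖ := by
  obtain ⟨s, -, hs⟩ := isCompact_univ.exists_isMaxOn Set.univ_nonempty
    (f.continuous.abs.continuousOn (s := Set.univ))
  refine ⟨s, le_antisymm (f.norm_coe_le_norm s) ((f.norm_le (abs_nonneg _)).mpr fun x => ?_)⟩
  exact hs (Set.mem_univ x)

lemma norm_evalCLM_le (t : X) : ‖δ t‖ ≤ 1 :=
  ContinuousLinearMap.opNorm_le_bound _ zero_le_one fun f => by simpa using f.norm_coe_le_norm t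

lemma apply_nonpos_of_dissipative {T : C(X, ℝ) →L[ℝ] C(X, ℝ)}
    (hT : ∀ lam ∈ numericalRange ℝ T, lam ≤ 0) {f : C(X, ℝ)} {s : X} (hf : ‖f‖ ≤ 1)
    (hs : f s = 1) : T f s ≤ 0 := by
  have hf1 : ‖f‖ = 1 := le_antisymm hf (by simpa [hs] using f.norm_coe_le_norm s)
  have hδ : ‖δ s‖ = 1 :=
    le_antisymm (norm_evalCLM_le s) (by simpa [hs, hf1] using (δ s).le_opNorm f)
  exact hT _ ⟨f, δ s, hf1, hδ, hs, rfl⟩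

end CompactSpace

lemma linearIndependent_of_apply_eq_single {ι R M : Type*} [Semiring R] [AddCommMonoid M]
    [Module R M] [DecidableEq ι] (v : ι → M) (f : ι → M →ₗ[R] R)
    (h : ∀ i j, f i (v j) = Pi.single (M := fun _ => R) j 1 i) : LinearIndependent R v :=
  .of_comp (LinearMap.pi f) <| by
    have hv : LinearMap.pi f ∘ v = fun j => Pi.single j 1 := by ext; simp [h]
    rw [hv]
    exact Pi.linearIndependent_single_one ι R

section RankOne

variable {Y : Type*} [NormedAddCommGroup Y] [NormedSpace ℝ Y]

lemma finiteDimensional_range_smulRight (Φ : StrongDual ℝ Y) (y₀ : Y) :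
    FiniteDimensional ℝ (LinearMap.range ((Φ.smulRight y₀ : Y →L[ℝ] Y) : Y →ₗ[ℝ] Y)) := by
  refine Submodule.finiteDimensional_of_le (S₂ := ℝ ∙ y₀) ?_
  rintro _ ⟨y, rfl⟩
  exact Submodule.mem_span_singleton.mpr ⟨Φ y, rfl⟩

/-- `h` says that `y ↦ Φ y • y₀` is an `L`-projection. -/
lemma numericalRange_smulRight_neg_nonpos (Φ : StrongDual ℝ Y) (y₀ : Y)
    (h : ∀ y, |Φ y| + ‖y - Φ y • y₀‖ ≤ ‖y‖) :
    ∀ lam ∈ numericalRange ℝ (Φ.smulRight (-y₀)), lam ≤ 0 := by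
  rintro _ ⟨y, Ψ, hy, hΨ, hΨy, rfl⟩
  have hΨle : Ψ (y - Φ y • y₀) ≤ ‖y - Φ y • y₀‖ :=
    (le_abs_self _).trans ((Ψ.le_opNorm _).trans_eq (by rw [hΨ, one_mul]))
  have hy' := h y
  rw [map_sub, map_smul, hΨy, smul_eq_mul] at hΨle
  rw [hy] at hy'
  simp only [ContinuousLinearMap.smulRight_apply, smul_neg, map_neg, map_smul, smul_eq_mul]
  nlinarith [abs_nonneg (Φ y), le_abs_self (Φ y), neg_abs_le (Φ y)]

end RankOne

lemma norm_smul_le_abs {F : Type*} [NormedAddCommGroup F] [NormedSpace ℝ F] {e : F}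
    (he : ‖e‖ ≤ 1) (a : ℝ) : ‖a • e‖ ≤ |a| := by
  rw [norm_smul, Real.norm_eq_abs]; exact mul_le_of_le_one_right (abs_nonneg _) he

section LpOne

variable {F : Type*} [NormedAddCommGroup F] [NormedSpace ℝ F] [CompleteSpace F]

lemma lpOne_norm_eq_tsum (u : lp (fun _ : ℕ => ℝ) 1) : ‖u‖ = ∑' n, |u n| := by
  simpa using lp.norm_eq_tsum_rpow (p := 1) (by norm_num) u

lemma summable_abs_lpOne (u : lp (fun _ : ℕ => ℝ) 1) : Summable fun n => |u n| := by
  simpa using (lp.memℓp u).summable (p := 1) (by norm_num)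

lemma summable_smul_lpOne {e : ℕ → F} (he : ∀ n, ‖e n‖ ≤ 1) (u : lp (fun _ : ℕ => ℝ) 1) :
    Summable fun n => u n • e n :=
  .of_norm_bounded (summable_abs_lpOne u) fun n => norm_smul_le_abs (he n) _

def lpOneSum (e : ℕ → F) (he : ∀ n, ‖e n‖ ≤ 1) : lp (fun _ : ℕ => ℝ) 1 →L[ℝ] F :=
  LinearMap.mkContinuous
    { toFun := fun u => ∑' n, u n • e n
      map_add' := fun u v => by
        simp only [lp.coeFn_add, Pi.add_apply, add_smul]
        exact (summable_smul_lpOne he u).tsum_add (summable_smul_lpOne he v)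
      map_smul' := fun c u => by
        simp only [lp.coeFn_smul, Pi.smul_apply, smul_eq_mul, mul_smul, RingHom.id_apply]
        exact (summable_smul_lpOne he u).tsum_const_smul c }
    1 fun u => by
      rw [one_mul, lpOne_norm_eq_tsum]
      exact tsum_of_norm_bounded (summable_abs_lpOne u).hasSum fun n => norm_smul_le_abs (he n) _

lemma lpOneSum_apply (e : ℕ → F) (he : ∀ n, ‖e n‖ ≤ 1) (u : lp (fun _ : ℕ => ℝ) 1) :
    lpOneSum e he u = ∑' n, u n • e n :=
  rfl

end LpOne

section PuncturedMass

variable {X : Type*} [TopologicalSpace X] [CompactSpace X]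

def puncturedBall (t : X) (A : Set X) : Set C(X, ℝ) :=
  {g | ‖g‖ ≤ 1 ∧ support g ⊆ A ∧ g =ᶠ[𝓝 t] 0}

/-- The total variation on `A \ {t}` of the measure representing `φ`, computed without measures. -/
def puncturedMass (φ : StrongDual ℝ C(X, ℝ)) (t : X) (A : Set X) : ℝ :=
  sSup (φ '' puncturedBall t A)

variable {φ : StrongDual ℝ C(X, ℝ)} {t : X} {A B : Set X} {g : C(X, ℝ)}

lemma zero_mem_puncturedBall : (0 : C(X, ℝ)) ∈ puncturedBall t A :=
  ⟨by simp, by simp, .of_forall fun _ => rfl⟩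

lemma le_puncturedMass (hg : ‖g‖ ≤ 1) (hA : support g ⊆ A) (ht : g =ᶠ[𝓝 t] 0) :
    φ g ≤ puncturedMass φ t A :=
  le_csSup ⟨‖φ‖, by rintro _ ⟨g, hg, rfl⟩; exact apply_le_norm_of_norm_le_one φ hg.1⟩
    ⟨g, ⟨hg, hA, ht⟩, rfl⟩

lemma puncturedMass_nonneg : 0 ≤ puncturedMass φ t A := by
  simpa using le_puncturedMass (φ := φ) (t := t) (A := A) (g := 0) (by simp) (by simp)
    (.of_forall fun _ => rfl)

lemma puncturedMass_le_of_forall (c : ℝ)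
    (h : ∀ g : C(X, ℝ), ‖g‖ ≤ 1 → support g ⊆ A → g =ᶠ[𝓝 t] 0 → φ g ≤ c) :
    puncturedMass φ t A ≤ c :=
  csSup_le ⟨_, _, zero_mem_puncturedBall, rfl⟩
    (by rintro _ ⟨g, hg, rfl⟩; exact h g hg.1 hg.2.1 hg.2.2)

lemma exists_lt_apply_of_lt_puncturedMass {θ : ℝ} (hθ : θ < puncturedMass φ t A) :
    ∃ g : C(X, ℝ), ‖g‖ ≤ 1 ∧ support g ⊆ A ∧ g =ᶠ[𝓝 t] 0 ∧ θ < φ g := by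
  obtain ⟨_, ⟨g, hg, rfl⟩, hθg⟩ := exists_lt_of_lt_csSup (s := φ '' puncturedBall t A)
    ⟨_, _, zero_mem_puncturedBall, rfl⟩ hθ
  exact ⟨g, hg.1, hg.2.1, hg.2.2, hθg⟩

lemma puncturedMass_mono (h : A ⊆ B) : puncturedMass φ t A ≤ puncturedMass φ t B :=
  puncturedMass_le_of_forall _ fun _ hg hA ht => le_puncturedMass hg (hA.trans h) ht

lemma apply_le_norm_mul_puncturedMass (hA : support g ⊆ A) (ht : g =ᶠ[𝓝 t] 0) :
    φ g ≤ ‖g‖ * puncturedMass φ t A := by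
  rcases eq_or_ne g 0 with rfl | hg
  · simp
  have hg' : 0 < ‖g‖ := norm_pos_iff.mpr hg
  have := le_puncturedMass (φ := φ) (g := ‖g‖⁻¹ • g) (by simp [norm_smul, hg'.ne'])
    ((support_const_smul_subset _ _).trans hA) (ht.mono fun x hx => by simp [hx])
  rw [map_smul, smul_eq_mul] at this
  rwa [inv_mul_le_iff₀ hg'] at this

lemma abs_apply_le_norm_mul_puncturedMass (hA : support g ⊆ A) (ht : g =ᶠ[𝓝 t] 0) :
    |φ g| ≤ ‖g‖ * puncturedMass φ t A := by
  refine abs_le'.mpr ⟨apply_le_norm_mul_puncturedMass hA ht, ?_⟩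
  simpa using apply_le_norm_mul_puncturedMass (φ := φ) (g := -g) (by simpa using hA)
    (by simpa using ht.neg)

lemma puncturedMass_add_le_of_disjoint (h : Disjoint A B) :
    puncturedMass φ t A + puncturedMass φ t B ≤ puncturedMass φ t (A ∪ B) := by
  rw [← le_sub_iff_add_le']
  refine puncturedMass_le_of_forall _ fun h' hh' hB htB => ?_
  rw [le_sub_comm]
  refine puncturedMass_le_of_forall _ fun g hg hA htA => ?_
  rw [le_sub_iff_add_le, ← map_add]
  have hdisj : g * h' = 0 := by
    ext x
    by_cases hx : g x = 0
    · simp [hx]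
    · simp [notMem_support.mp fun hx' => h.ne_of_mem (hA hx) (hB hx') rfl]
  refine le_puncturedMass ?_ ((support_add _ _).trans (Set.union_subset_union hA hB)) ?_
  · rw [ContinuousMap.norm_add_eq_max hdisj]; exact max_le hg hh'
  · filter_upwards [htA, htB] with x hx hx'
    simp [hx, hx']

lemma lowerSemicontinuous_puncturedMass (T : C(X, ℝ) →L[ℝ] C(X, ℝ)) (A : Set X) :
    LowerSemicontinuous fun z => puncturedMass ((δ z).comp T) z A := by
  intro s θ hθ
  obtain ⟨g, hg, hA, hs, hθg⟩ := exists_lt_apply_of_lt_puncturedMass hθ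
  filter_upwards [hs.eventually_nhds, ((T g).continuous.tendsto s).eventually_const_lt hθg]
    with z hz hθz
  exact hθz.trans_le (le_puncturedMass (φ := (δ z).comp T) hg hA hz)

end PuncturedMass

namespace PiNat

variable {E : Type*} [TopologicalSpace E] [DiscreteTopology E]

lemma isClopen_cylinder (x : ℕ → E) (n : ℕ) : IsClopen (cylinder x n) :=
  ⟨by rw [cylinder_eq_pi]; exact isClosed_set_pi fun _ _ => isClosed_discrete _,
    isOpen_cylinder _ x n⟩

lemma cylinder_mem_nhds (x : ℕ → E) (n : ℕ) : cylinder x n ∈ 𝓝 x :=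
  (isOpen_cylinder _ x n).mem_nhds (self_mem_cylinder x n)

lemma eventually_cylinder_subset {x : ℕ → E} {U : Set (ℕ → E)} (hU : U ∈ 𝓝 x) :
    ∀ᶠ n in atTop, cylinder x n ⊆ U := by
  obtain ⟨_, ⟨y, n, rfl⟩, hx, hsub⟩ :=
    (isTopologicalBasis_cylinders fun _ => E).mem_nhds_iff.mp hU
  rw [← mem_cylinder_iff_eq.mp hx] at hsub
  exact eventually_atTop.mpr ⟨n, fun m hm => (cylinder_anti x hm).trans hsub⟩

def cylinderIndicator (x : ℕ → E) (n : ℕ) : C(ℕ → E, ℝ) :=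
  (LocallyConstant.charFn ℝ (isClopen_cylinder x n)).toContinuousMap

local notation "χ" => cylinderIndicator

variable {x y : ℕ → E} {n : ℕ}

lemma cylinderIndicator_of_mem (h : y ∈ cylinder x n) : χ x n y = 1 :=
  Set.indicator_of_mem h _

lemma cylinderIndicator_of_notMem (h : y ∉ cylinder x n) : χ x n y = 0 :=
  Set.indicator_of_notMem h _

lemma cylinderIndicator_self (x : ℕ → E) (n : ℕ) : χ x n x = 1 :=
  cylinderIndicator_of_mem (self_mem_cylinder x n)

lemma cylinderIndicator_eq_of_mem (h : y ∈ cylinder x n) : χ y n = χ x n := by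
  simp only [cylinderIndicator, mem_cylinder_iff_eq.mp h]

lemma support_cylinderIndicator_subset (x : ℕ → E) (n : ℕ) : support (χ x n) ⊆ cylinder x n :=
  fun _ hy => by_contra fun h => hy (cylinderIndicator_of_notMem h)

lemma cylinderIndicator_mem_Icc (x : ℕ → E) (n : ℕ) (y : ℕ → E) : χ x n y ∈ Set.Icc 0 1 := by
  by_cases h : y ∈ cylinder x n
  · simp [cylinderIndicator_of_mem h]
  · simp [cylinderIndicator_of_notMem h]

lemma support_cylinderIndicator_sub_subset (t : ℕ → E) {k m : ℕ} (h : k ≤ m) :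
    support (χ t k - χ t m) ⊆ cylinder t k := fun x hx => by
  by_contra hxk
  exact hx (by simp [cylinderIndicator_of_notMem hxk,
    cylinderIndicator_of_notMem fun hxm => hxk (cylinder_anti t h hxm)])

lemma cylinderIndicator_sub_eventuallyEq_zero (t : ℕ → E) {k m : ℕ} (h : k ≤ m) :
    ⇑(χ t k - χ t m) =ᶠ[𝓝 t] 0 := by
  filter_upwards [cylinder_mem_nhds t m] with x hx
  simp [cylinderIndicator_of_mem hx, cylinderIndicator_of_mem (cylinder_anti t h hx)]

lemma one_sub_cylinderIndicator_eventuallyEq_zero (t : ℕ → E) (k : ℕ) :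
    ⇑(1 - χ t k) =ᶠ[𝓝 t] 0 := by
  filter_upwards [cylinder_mem_nhds t k] with x hx
  simp [cylinderIndicator_of_mem hx]

/-- `σ` on `cylinder t k` and `f` off it. -/
def cylinderPatch (t : ℕ → E) (k : ℕ) (σ : ℝ) (f : C(ℕ → E, ℝ)) : C(ℕ → E, ℝ) :=
  f * (1 - χ t k) + σ • χ t k

lemma cylinderPatch_self (t : ℕ → E) (k : ℕ) (σ : ℝ) (f : C(ℕ → E, ℝ)) :
    cylinderPatch t k σ f t = σ := by
  simp [cylinderPatch, cylinderIndicator_self]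

end PiNat

local notation "χ" => PiNat.cylinderIndicator

section AtomMass

variable {E : Type*} [TopologicalSpace E] [DiscreteTopology E] [Finite E]

lemma norm_cylinderIndicator_sub_le (t : ℕ → E) (k m : ℕ) : ‖χ t k - χ t m‖ ≤ 1 :=
  ContinuousMap.norm_sub_le_one_of_mem_Icc (cylinderIndicator_mem_Icc t k)
    (cylinderIndicator_mem_Icc t m)

lemma norm_one_sub_cylinderIndicator_le (t : ℕ → E) (k : ℕ) : ‖1 - χ t k‖ ≤ 1 :=
  ContinuousMap.norm_sub_le_one_of_mem_Icc (by simp) (cylinderIndicator_mem_Icc t k)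

lemma norm_cylinderIndicator_le (t : ℕ → E) (k : ℕ) : ‖χ t k‖ ≤ 1 := by
  simpa using ContinuousMap.norm_sub_le_one_of_mem_Icc (cylinderIndicator_mem_Icc t k)
    (g := 0) (by simp)

lemma tendsto_norm_mul_cylinderIndicator {t : ℕ → E} {g : C(ℕ → E, ℝ)} (hg : g t = 0) :
    Tendsto (fun m => ‖g * χ t m‖) atTop (𝓝 0) := by
  refine Metric.tendsto_nhds.mpr fun ε hε => ?_
  have hU : g ⁻¹' Metric.ball (g t) (ε / 2) ∈ 𝓝 t :=
    g.continuous.continuousAt.preimage_mem_nhds (Metric.ball_mem_nhds _ (half_pos hε))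
  filter_upwards [eventually_cylinder_subset hU] with m hm
  have : ‖g * χ t m‖ ≤ ε / 2 := by
    refine (ContinuousMap.norm_le _ (half_pos hε).le).mpr fun x => ?_
    by_cases hx : x ∈ cylinder t m
    · have := hm hx
      simp only [Set.mem_preimage, Metric.mem_ball, hg, dist_zero_right] at this
      simpa [cylinderIndicator_of_mem hx] using this.le
    · simpa [cylinderIndicator_of_notMem hx] using (half_pos hε).le
  rw [dist_zero_right, norm_norm]
  linarith

variable (φ : StrongDual ℝ C(ℕ → E, ℝ)) (t : ℕ → E)

lemma tendsto_puncturedMass_cylinder :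
    Tendsto (fun k => puncturedMass φ t (cylinder t k)) atTop (𝓝 0) := by
  set ρ := fun k => puncturedMass φ t (cylinder t k)
  have hbdd : BddBelow (Set.range ρ) := ⟨0, by rintro _ ⟨k, rfl⟩; exact puncturedMass_nonneg⟩
  have hlim := tendsto_atTop_ciInf (fun _ _ h => puncturedMass_mono (cylinder_anti t h)) hbdd
  suffices ρ 0 ≤ ρ 0 - ⨅ k, ρ k by
    rwa [le_antisymm (by linarith) (le_ciInf fun k => puncturedMass_nonneg)] at hlim
  -- `ρ 0 ≥ ρ m + (mass on cylinder t 0 \ cylinder t m)`, and each test function lives on such a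
  -- difference, so `ρ 0 ≤ ρ 0 - ⨅ ρ`.
  refine puncturedMass_le_of_forall _ fun g hg hA ht => ?_
  obtain ⟨m, hm⟩ := (eventually_cylinder_subset ht).exists
  calc φ g ≤ puncturedMass φ t (cylinder t 0 \ cylinder t m) :=
        le_puncturedMass hg (fun x hx => ⟨hA hx, fun hxm => hx (hm hxm)⟩) ht
    _ ≤ ρ 0 - ρ m := le_sub_iff_add_le.mpr <|
        (puncturedMass_add_le_of_disjoint Set.disjoint_sdiff_left).trans <| puncturedMass_mono <|
          Set.union_subset Set.sdiff_subset (cylinder_anti t m.zero_le)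
    _ ≤ ρ 0 - ⨅ k, ρ k := sub_le_sub_left (ciInf_le hbdd m) _

lemma abs_apply_mul_cylinderIndicator_sub_le (g : C(ℕ → E, ℝ)) {k m : ℕ} (h : k ≤ m) :
    |φ (g * (χ t k - χ t m))| ≤ ‖g‖ * puncturedMass φ t (cylinder t k) := by
  refine (abs_apply_le_norm_mul_puncturedMass (t := t) (A := cylinder t k) ?_ ?_).trans ?_
  · exact (support_mul_subset_right _ _).trans (support_cylinderIndicator_sub_subset t h)
  · filter_upwards [cylinderIndicator_sub_eventuallyEq_zero t h] with x hx
    simp [hx]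
  · gcongr
    · exact puncturedMass_nonneg
    · exact (norm_mul_le _ _).trans (mul_le_of_le_one_right (norm_nonneg g)
        (norm_cylinderIndicator_sub_le t k m))

lemma cauchySeq_apply_cylinderIndicator : CauchySeq fun k => φ (χ t k) := by
  refine cauchySeq_of_le_tendsto_0' _ (fun k m h => ?_) (tendsto_puncturedMass_cylinder φ t)
  have h1 : ‖(1 : C(ℕ → E, ℝ))‖ ≤ 1 := (ContinuousMap.norm_le _ zero_le_one).mpr (by simp)
  simpa [Real.dist_eq] using (abs_apply_mul_cylinderIndicator_sub_le φ t 1 h).trans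
    (mul_le_of_le_one_left puncturedMass_nonneg h1)

/-- The mass of the atom at `t` of the measure representing `φ`. -/
def atomMass : ℝ := limUnder atTop fun k => φ (χ t k)

lemma tendsto_atomMass : Tendsto (fun k => φ (χ t k)) atTop (𝓝 (atomMass φ t)) :=
  (cauchySeq_apply_cylinderIndicator φ t).tendsto_limUnder

lemma abs_apply_mul_cylinderIndicator_le {g : C(ℕ → E, ℝ)} (hg : g t = 0) (k : ℕ) :
    |φ (g * χ t k)| ≤ ‖g‖ * puncturedMass φ t (cylinder t k) := by
  have key : ∀ m ≥ k, |φ (g * χ t k)| ≤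
      ‖g‖ * puncturedMass φ t (cylinder t k) + ‖φ‖ * ‖g * χ t m‖ := fun m hm => by
    rw [show g * χ t k = g * (χ t k - χ t m) + g * χ t m by ring, map_add]
    exact (abs_add_le _ _).trans (add_le_add (abs_apply_mul_cylinderIndicator_sub_le φ t g hm)
      (φ.le_opNorm _))
  refine ge_of_tendsto ?_ (eventually_atTop.mpr ⟨k, key⟩)
  simpa using tendsto_const_nhds.add ((tendsto_norm_mul_cylinderIndicator hg).const_mul ‖φ‖)

lemma tendsto_apply_mul_cylinderIndicator (g : C(ℕ → E, ℝ)) :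
    Tendsto (fun k => φ (g * χ t k)) atTop (𝓝 (g t * atomMass φ t)) := by
  set h := g - g t • (1 : C(ℕ → E, ℝ))
  have hh : h t = 0 := by simp [h]
  have hsplit : ∀ k, φ (g * χ t k) = g t * φ (χ t k) + φ (h * χ t k) := fun k => by
    rw [show g * χ t k = g t • χ t k + h * χ t k by simp [h, sub_mul], map_add, map_smul,
      smul_eq_mul]
  have hh0 : Tendsto (fun k => φ (h * χ t k)) atTop (𝓝 0) :=
    squeeze_zero_norm (fun k => abs_apply_mul_cylinderIndicator_le φ t hh k)
      (by simpa using (tendsto_puncturedMass_cylinder φ t).const_mul ‖h‖)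
  simpa [hsplit] using ((tendsto_atomMass φ t).const_mul (g t)).add hh0

lemma apply_le_norm_mul_puncturedMass_of_apply_eq_zero {A : Set (ℕ → E)} {g : C(ℕ → E, ℝ)}
    (hA : support g ⊆ A) (hg : g t = 0) : φ g ≤ ‖g‖ * puncturedMass φ t A := by
  have key : ∀ j, φ g - φ (g * χ t j) ≤ ‖g‖ * puncturedMass φ t A := fun j => by
    rw [← map_sub, ← mul_one_sub]
    refine (apply_le_norm_mul_puncturedMass (t := t)
      ((support_mul_subset_left _ _).trans hA) ?_).trans ?_
    · filter_upwards [one_sub_cylinderIndicator_eventuallyEq_zero t j] with x hx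
      simp [hx]
    · exact mul_le_mul_of_nonneg_right ((norm_mul_le _ _).trans (mul_le_of_le_one_right
        (norm_nonneg g) (norm_one_sub_cylinderIndicator_le t j))) puncturedMass_nonneg
  have := (tendsto_const_nhds (x := φ g)).sub (tendsto_apply_mul_cylinderIndicator φ t g)
  simpa [hg] using le_of_tendsto' this key

lemma abs_atomMass_le : |atomMass φ t| ≤ ‖φ‖ :=
  le_of_tendsto' (tendsto_atomMass φ t).abs fun k =>
    (φ.le_opNorm _).trans (mul_le_of_le_one_right (norm_nonneg φ) (norm_cylinderIndicator_le t k))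

lemma norm_cylinderPatch_le (k : ℕ) {σ : ℝ} {f : C(ℕ → E, ℝ)} (hσ : |σ| ≤ 1) (hf : ‖f‖ ≤ 1) :
    ‖cylinderPatch t k σ f‖ ≤ 1 := by
  refine (ContinuousMap.norm_le _ zero_le_one).mpr fun x => ?_
  by_cases hx : x ∈ cylinder t k
  · simpa [cylinderPatch, cylinderIndicator_of_mem hx] using hσ
  · simpa [cylinderPatch, cylinderIndicator_of_notMem hx] using (f.norm_coe_le_norm x).trans hf

lemma tendsto_apply_cylinderPatch (σ : ℝ) (f : C(ℕ → E, ℝ)) :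
    Tendsto (fun k => φ (cylinderPatch t k σ f)) atTop
      (𝓝 (φ f - f t * atomMass φ t + σ * atomMass φ t)) := by
  have h := ((tendsto_const_nhds (x := φ f)).sub (tendsto_apply_mul_cylinderIndicator φ t f)).add
    ((tendsto_atomMass φ t).const_mul σ)
  refine h.congr fun k => ?_
  simp [cylinderPatch, mul_sub]

end AtomMass

section AtomicPart

variable {E : Type*} [TopologicalSpace E] [DiscreteTopology E]

lemma atomMass_evalCLM_self (t : ℕ → E) : atomMass (δ t) t = 1 :=
  Tendsto.limUnder_eq (tendsto_const_nhds.congr fun k => by simp [cylinderIndicator_self])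

lemma atomMass_evalCLM_of_ne {s t : ℕ → E} (h : s ≠ t) : atomMass (δ s) t = 0 := by
  refine Tendsto.limUnder_eq (tendsto_const_nhds.congr' ?_)
  filter_upwards [eventually_cylinder_subset (isOpen_compl_singleton.mem_nhds h.symm)] with k hk
  simp [cylinderIndicator_of_notMem fun hs => hk hs rfl]

variable [Finite E]

lemma atomMass_add (φ ψ : StrongDual ℝ C(ℕ → E, ℝ)) (t : ℕ → E) :
    atomMass (φ + ψ) t = atomMass φ t + atomMass ψ t :=
  ((tendsto_atomMass φ t).add (tendsto_atomMass ψ t)).limUnder_eq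

lemma atomMass_smul (c : ℝ) (φ : StrongDual ℝ C(ℕ → E, ℝ)) (t : ℕ → E) :
    atomMass (c • φ) t = c * atomMass φ t :=
  ((tendsto_atomMass φ t).const_mul c).limUnder_eq

def atomMassCLM (t : ℕ → E) : StrongDual ℝ C(ℕ → E, ℝ) →L[ℝ] ℝ :=
  LinearMap.mkContinuous (E := StrongDual ℝ C(ℕ → E, ℝ))
    { toFun := (atomMass · t)
      map_add' := (atomMass_add · · t)
      map_smul' := (atomMass_smul · · t) }
    1 fun φ => by rw [Real.norm_eq_abs, one_mul]; exact abs_atomMass_le φ t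

lemma abs_atomMass_add_norm_sub_le (φ : StrongDual ℝ C(ℕ → E, ℝ)) (t : ℕ → E) :
    |atomMass φ t| + ‖φ - atomMass φ t • δ t‖ ≤ ‖φ‖ := by
  set a := atomMass φ t
  obtain ⟨σ, hσ, hσa⟩ : ∃ σ : ℝ, |σ| ≤ 1 ∧ σ * a = |a| := by
    rcases le_or_gt 0 a with ha | ha
    · exact ⟨1, by simp, by simp [abs_of_nonneg ha]⟩
    · exact ⟨-1, by simp, by simp [abs_of_neg ha]⟩
  -- `φ` sees `|a| + (φ - a • δ t) f` on `f` patched to the sign of `a` near `t`.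
  have key : ∀ f : C(ℕ → E, ℝ), ‖f‖ ≤ 1 → |a| + (φ - a • δ t) f ≤ ‖φ‖ := fun f hf => by
    have := le_of_tendsto' (tendsto_apply_cylinderPatch φ t σ f) fun k =>
      apply_le_norm_of_norm_le_one φ (norm_cylinderPatch_le t k hσ hf)
    simp only [sub_apply, smul_apply, ContinuousMap.evalCLM_apply, smul_eq_mul]
    linarith
  have h0 := key 0 (by simp)
  simp only [map_zero, add_zero] at h0
  suffices ‖φ - a • δ t‖ ≤ ‖φ‖ - |a| by linarith
  refine ContinuousLinearMap.opNorm_le_of_unit_norm (by linarith) fun f hf => ?_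
  have h₁ := key f hf.le
  have h₂ := key (-f) (by simp [hf])
  rw [map_neg] at h₂
  rw [Real.norm_eq_abs, abs_le]
  constructor <;> linarith

def negAtomicPart (t : ℕ → E) :
    StrongDual ℝ C(ℕ → E, ℝ) →L[ℝ] StrongDual ℝ C(ℕ → E, ℝ) :=
  (atomMassCLM t).smulRight (-δ t)

lemma numericalRange_negAtomicPart_nonpos (t : ℕ → E) :
    ∀ lam ∈ numericalRange ℝ (X := StrongDual ℝ C(ℕ → E, ℝ)) (negAtomicPart t), lam ≤ 0 :=
  numericalRange_smulRight_neg_nonpos _ _ fun φ => abs_atomMass_add_norm_sub_le φ t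

lemma linearIndependent_negAtomicPart {p : ℕ → ℕ → E} (hp : Injective p) :
    LinearIndependent ℝ fun n => negAtomicPart (p n) := by
  classical
  refine linearIndependent_of_apply_eq_single _
    (fun m => -((ContinuousLinearMap.apply ℝ ℝ (1 : C(ℕ → E, ℝ))).comp
      (ContinuousLinearMap.apply ℝ _ (δ (p m))) : _ →ₗ[ℝ] ℝ)) fun m n => ?_
  rcases eq_or_ne m n with rfl | hmn
  · simp [negAtomicPart, atomMassCLM, atomMass_evalCLM_self]
  · simp [negAtomicPart, atomMassCLM, atomMass_evalCLM_of_ne (hp.ne hmn), hmn]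

end AtomicPart

section Operator

variable {E : Type*} [TopologicalSpace E] [DiscreteTopology E] [Finite E]
  (T : C(ℕ → E, ℝ) →L[ℝ] C(ℕ → E, ℝ))

def diagonalMass (s : ℕ → E) : ℝ := atomMass ((δ s).comp T) s

lemma tendsto_diagonalMass (s : ℕ → E) :
    Tendsto (fun k => T (χ s k) s) atTop (𝓝 (diagonalMass T s)) :=
  tendsto_atomMass _ s

lemma exists_cylinder_subset_puncturedMass_le {θ : ℝ} (hθ : 0 < θ) (t₀ : ℕ → E) (k₀ : ℕ) :
    ∃ t L, cylinder t L ⊆ cylinder t₀ k₀ ∧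
      ∀ s ∈ cylinder t L, puncturedMass ((δ s).comp T) s (cylinder t L) ≤ θ := by
  -- Otherwise the open sets `G L` are dense in `C`, and a point of `C` in all of them has
  -- off-diagonal masses on `cylinder z L` bounded below by `θ`, contradicting their decay.
  by_contra! h
  set C := cylinder t₀ k₀
  set G : ℕ → Set (ℕ → E) :=
    fun L => {z | θ < puncturedMass ((δ z).comp T) z (cylinder z L)} ∪ Cᶜ
  have hopen (L : ℕ) : IsOpen (G L) := by
    refine IsOpen.union (isOpen_iff_mem_nhds.mpr fun z hz => ?_)
      (isClopen_cylinder t₀ k₀).isClosed.isOpen_compl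
    filter_upwards [lowerSemicontinuous_puncturedMass T (cylinder z L) z θ hz,
      cylinder_mem_nhds z L] with y hy hyz
    exact (mem_cylinder_iff_eq.mp hyz).symm ▸ hy
  have hdense (L : ℕ) : Dense (G L) := by
    refine dense_iff_inter_open.mpr fun V hV ⟨v, hv⟩ => ?_
    by_cases hvC : v ∈ C
    · obtain ⟨m, hmV, hmL⟩ := ((eventually_cylinder_subset (Filter.inter_mem (hV.mem_nhds hv)
        ((isOpen_cylinder _ t₀ k₀).mem_nhds hvC))).and (eventually_ge_atTop L)).exists
      obtain ⟨s, hs, hθs⟩ := h v m fun x hx => (hmV hx).2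
      rw [← mem_cylinder_iff_eq.mp hs] at hθs
      exact ⟨s, (hmV hs).1, Or.inl (hθs.trans_le (puncturedMass_mono (cylinder_anti s hmL)))⟩
    · exact ⟨v, hv, Or.inr hvC⟩
  obtain ⟨z, hzC, hz⟩ := (dense_iInter_of_isOpen_nat hopen hdense).inter_open_nonempty C
    (isOpen_cylinder _ t₀ k₀) ⟨t₀, self_mem_cylinder t₀ k₀⟩
  obtain ⟨L, hL⟩ :=
    ((tendsto_puncturedMass_cylinder ((δ z).comp T) z).eventually (gt_mem_nhds hθ)).exists
  exact hL.not_gt ((Set.mem_iInter.mp hz L).resolve_right (not_not.mpr hzC))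

lemma apply_le_of_apply_eq_norm {A : Set (ℕ → E)} {f : C(ℕ → E, ℝ)} {s : ℕ → E} (hA : A ∈ 𝓝 s)
    (hf : support f ⊆ A) (hs : f s = ‖f‖) :
    T f s ≤ ‖f‖ * diagonalMass T s + 2 * ‖f‖ * puncturedMass ((δ s).comp T) s A := by
  have key : ∀ᶠ m in atTop,
      T f s ≤ ‖f‖ * T (χ s m) s + 2 * ‖f‖ * puncturedMass ((δ s).comp T) s A := by
    filter_upwards [eventually_cylinder_subset hA] with m hm
    set h := f - ‖f‖ • χ s m
    have hsupp : support h ⊆ A := (support_sub _ _).trans <| Set.union_subset hf <|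
      (support_const_smul_subset _ _).trans <| (support_cylinderIndicator_subset s m).trans hm
    have hnorm : ‖h‖ ≤ 2 * ‖f‖ := (norm_sub_le _ _).trans <| by
      rw [norm_smul, norm_norm]
      nlinarith [norm_cylinderIndicator_le s m, norm_nonneg f]
    have hTh := apply_le_norm_mul_puncturedMass_of_apply_eq_zero ((δ s).comp T) s hsupp
      (by simp [h, hs, cylinderIndicator_self])
    have hTf : T f s = ‖f‖ * T (χ s m) s + T h s := by simp [h]
    rw [hTf]
    gcongr
    exact hTh.trans (mul_le_mul_of_nonneg_right hnorm puncturedMass_nonneg)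
  exact ge_of_tendsto (((tendsto_diagonalMass T s).const_mul ‖f‖).add_const _) key

lemma mul_norm_le_norm_apply {A : Set (ℕ → E)} (hA : IsOpen A) {β : ℝ}
    (hβ : ∀ s ∈ A, diagonalMass T s ≤ -β ∧ puncturedMass ((δ s).comp T) s A ≤ β / 4)
    {f : C(ℕ → E, ℝ)} (hf : support f ⊆ A) : β / 2 * ‖f‖ ≤ ‖T f‖ := by
  rcases eq_or_ne f 0 with rfl | hf₀
  · simp
  obtain ⟨x, -⟩ := DFunLike.ne_iff.mp hf₀
  have : Nonempty (ℕ → E) := ⟨x⟩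
  obtain ⟨s, hs⟩ := f.exists_abs_apply_eq_norm
  have hsA : s ∈ A := by
    by_contra hsA
    rw [notMem_support.mp fun h => hsA (hf h), abs_zero, eq_comm, norm_eq_zero] at hs
    exact hf₀ hs
  have main (g : C(ℕ → E, ℝ)) (hg : support g ⊆ A) (hgs : g s = ‖g‖) :
      β / 2 * ‖g‖ ≤ -T g s := by
    have := apply_le_of_apply_eq_norm T (hA.mem_nhds hsA) hg hgs
    nlinarith [hβ s hsA, norm_nonneg g]
  calc β / 2 * ‖f‖ ≤ |T f s| := by
        rcases (abs_eq (norm_nonneg f)).mp hs with hfs | hfs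
        · exact (main f hf hfs).trans (neg_le_abs _)
        · have := main (-f) (by simpa using hf) (by simp [hfs])
          rw [norm_neg, map_neg, ContinuousMap.neg_apply, neg_neg] at this
          exact this.trans (le_abs_self _)
    _ ≤ ‖T f‖ := (T f).norm_coe_le_norm s

variable {T}

lemma diagonalMass_add_apply_nonpos (hT : ∀ lam ∈ numericalRange ℝ T, lam ≤ 0)
    {g : C(ℕ → E, ℝ)} {s : ℕ → E} (hg : ‖g‖ ≤ 1) (hgs : g s = 0) :
    diagonalMass T s + T g s ≤ 0 := by
  have := le_of_tendsto' (tendsto_apply_cylinderPatch ((δ s).comp T) s 1 g) fun k =>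
    apply_nonpos_of_dissipative hT (norm_cylinderPatch_le s k (by simp) hg)
      (cylinderPatch_self s k 1 g)
  simpa [hgs, diagonalMass, add_comm] using this

lemma diagonalMass_nonpos (hT : ∀ lam ∈ numericalRange ℝ T, lam ≤ 0) (s : ℕ → E) :
    diagonalMass T s ≤ 0 := by
  simpa using diagonalMass_add_apply_nonpos hT (g := 0) (s := s) (by simp) rfl

lemma abs_apply_le_neg_diagonalMass_mul_norm (hT : ∀ lam ∈ numericalRange ℝ T, lam ≤ 0)
    {g : C(ℕ → E, ℝ)} {s : ℕ → E} (hgs : g s = 0) : |T g s| ≤ -diagonalMass T s * ‖g‖ := by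
  rcases eq_or_ne g 0 with rfl | hg
  · simp
  have hg' : 0 < ‖g‖ := norm_pos_iff.mpr hg
  have h₁ := diagonalMass_add_apply_nonpos hT (g := ‖g‖⁻¹ • g) (s := s)
    (by simp [norm_smul, hg'.ne']) (by simp [hgs])
  have h₂ := diagonalMass_add_apply_nonpos hT (g := -(‖g‖⁻¹ • g)) (s := s)
    (by simp [norm_smul, hg'.ne']) (by simp [hgs])
  simp only [map_neg, map_smul, ContinuousMap.neg_apply, ContinuousMap.smul_apply,
    smul_eq_mul] at h₁ h₂
  have e : ‖g‖ * (‖g‖⁻¹ * T g s) = T g s := by field_simp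
  rw [abs_le]
  constructor <;>
    nlinarith [mul_le_mul_of_nonneg_left h₁ hg'.le, mul_le_mul_of_nonneg_left h₂ hg'.le]

lemma exists_diagonalMass_neg (hT : ∀ lam ∈ numericalRange ℝ T, lam ≤ 0) (hT₀ : T ≠ 0) :
    ∃ s, diagonalMass T s < 0 := by
  by_contra! h
  have hzero (s : ℕ → E) : diagonalMass T s = 0 := le_antisymm (diagonalMass_nonpos hT s) (h s)
  have happ {g : C(ℕ → E, ℝ)} {s : ℕ → E} (hgs : g s = 0) : T g s = 0 := by
    simpa [hzero] using abs_apply_le_neg_diagonalMass_mul_norm hT hgs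
  refine hT₀ (ContinuousLinearMap.ext fun f => ContinuousMap.ext fun s => ?_)
  have hχ (k : ℕ) : T (χ s k) s = T 1 s := by
    have := happ (g := 1 - χ s k) (s := s) (by simp [cylinderIndicator_self])
    rw [map_sub, ContinuousMap.sub_apply] at this
    linarith
  have hT1 : T 1 s = 0 := by
    rw [← hzero s]
    exact tendsto_nhds_unique (tendsto_const_nhds.congr fun k => (hχ k).symm)
      (tendsto_diagonalMass T s)
  have := happ (g := f - f s • 1) (s := s) (by simp)
  simpa [hT1, sub_eq_zero] using this

lemma two_mul_diagonalMass_le (hT : ∀ lam ∈ numericalRange ℝ T, lam ≤ 0) (s : ℕ → E) (k : ℕ) :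
    2 * diagonalMass T s ≤ T (χ s k) s := by
  have key (m : ℕ) : diagonalMass T s + T (χ s m) s ≤ T (χ s k) s := by
    have := diagonalMass_add_apply_nonpos hT (s := s) (norm_cylinderIndicator_sub_le s m k)
      (by simp [cylinderIndicator_self])
    rw [map_sub, ContinuousMap.sub_apply] at this
    linarith
  have := le_of_tendsto' (tendsto_const_nhds.add (tendsto_diagonalMass T s)) key
  linarith

lemma exists_cylinder_diagonalMass_le (hT : ∀ lam ∈ numericalRange ℝ T, lam ≤ 0)
    (hT₀ : T ≠ 0) : ∃ β > 0, ∃ t k, ∀ s ∈ cylinder t k, diagonalMass T s ≤ -β := by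
  obtain ⟨t, ht⟩ := exists_diagonalMass_neg hT hT₀
  obtain ⟨k, hk⟩ := ((tendsto_diagonalMass T t).eventually
    (gt_mem_nhds (by linarith : diagonalMass T t < diagonalMass T t / 2))).exists
  have hU : ∀ᶠ s in 𝓝 t, T (χ t k) s < diagonalMass T t / 2 ∧ s ∈ cylinder t k :=
    (((T (χ t k)).continuous.tendsto t).eventually (gt_mem_nhds hk)).and
      (cylinder_mem_nhds t k)
  obtain ⟨k', hk'⟩ := (eventually_cylinder_subset hU).exists
  refine ⟨-(diagonalMass T t / 4), by linarith, t, k', fun s hs => ?_⟩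
  have h₁ := two_mul_diagonalMass_le hT s k
  rw [cylinderIndicator_eq_of_mem (hk' hs).2] at h₁
  linarith [(hk' hs).1]

end Operator

section Rademacher

variable (t : ℕ → Bool) (L : ℕ)

def rademacher (n : ℕ) : C(ℕ → Bool, ℝ) :=
  χ t L * ⟨fun x => if x (L + n) then -1 else 1,
    (continuous_of_discreteTopology (f := fun b : Bool => if b then (-1 : ℝ) else 1)).comp
      (continuous_apply _)⟩

lemma rademacher_apply (n : ℕ) (x : ℕ → Bool) :
    rademacher t L n x = χ t L x * if x (L + n) then -1 else 1 :=
  rfl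

lemma norm_rademacher_le (n : ℕ) : ‖rademacher t L n‖ ≤ 1 := by
  refine (ContinuousMap.norm_le _ zero_le_one).mpr fun x => ?_
  by_cases hx : x ∈ cylinder t L
  · by_cases h : x (L + n) <;> simp [rademacher_apply, cylinderIndicator_of_mem hx, h]
  · simp [rademacher_apply, cylinderIndicator_of_notMem hx]

def rademacherEmbedding : lp (fun _ : ℕ => ℝ) 1 →L[ℝ] C(ℕ → Bool, ℝ) :=
  lpOneSum (rademacher t L) (norm_rademacher_le t L)

lemma rademacherEmbedding_apply_apply (u : lp (fun _ : ℕ => ℝ) 1) (x : ℕ → Bool) :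
    rademacherEmbedding t L u x = ∑' n, u n * rademacher t L n x := by
  simpa [rademacherEmbedding, lpOneSum_apply] using
    (δ x).map_tsum (summable_smul_lpOne (norm_rademacher_le t L) u)

lemma support_rademacherEmbedding_subset (u : lp (fun _ : ℕ => ℝ) 1) :
    support (rademacherEmbedding t L u) ⊆ cylinder t L := fun x hx => by
  by_contra hxL
  exact hx (by simp [rademacherEmbedding_apply_apply, rademacher_apply,
    cylinderIndicator_of_notMem hxL])

lemma norm_le_norm_rademacherEmbedding (u : lp (fun _ : ℕ => ℝ) 1) :
    ‖u‖ ≤ ‖rademacherEmbedding t L u‖ := by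
  -- the point of `cylinder t L` at which `u n * rademacher t L n` equals `|u n|` for every `n`
  set x : ℕ → Bool := fun i => if i < L then t i else decide (u (i - L) < 0)
  have hx : x ∈ cylinder t L := fun i hi => if_pos hi
  have hterm (n : ℕ) : u n * rademacher t L n x = |u n| := by
    have : x (L + n) = decide (u n < 0) := by simp [x]
    rcases lt_or_ge (u n) 0 with h | h
    · simp [rademacher_apply, cylinderIndicator_of_mem hx, this, h, abs_of_neg h]
    · simp [rademacher_apply, cylinderIndicator_of_mem hx, this, h.not_gt, abs_of_nonneg h]
  calc ‖u‖ = rademacherEmbedding t L u x := by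
        rw [rademacherEmbedding_apply_apply, tsum_congr hterm, lpOne_norm_eq_tsum]
    _ ≤ ‖rademacherEmbedding t L u‖ := (rademacherEmbedding t L u).apply_le_norm x

end Rademacher

theorem exists_lpOne_embedding_of_dissipative {T : C(ℕ → Bool, ℝ) →L[ℝ] C(ℕ → Bool, ℝ)}
    (hT₀ : T ≠ 0) (hT : ∀ lam ∈ numericalRange ℝ T, lam ≤ 0) :
    ∃ (J : lp (fun _ : ℕ => ℝ) 1 →L[ℝ] C(ℕ → Bool, ℝ)) (c : ℝ), 0 < c ∧
      ∀ u, c * ‖u‖ ≤ ‖J u‖ ∧ c * ‖u‖ ≤ ‖T (J u)‖ := by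
  obtain ⟨β, hβ, t₀, k₀, hdiag⟩ := exists_cylinder_diagonalMass_le hT hT₀
  obtain ⟨t, L, hsub, hsmall⟩ :=
    exists_cylinder_subset_puncturedMass_le T (by positivity : 0 < β / 4) t₀ k₀
  refine ⟨rademacherEmbedding t L, min 1 (β / 2), by positivity, fun u => ⟨?_, ?_⟩⟩
  · exact (mul_le_of_le_one_left (norm_nonneg u) (min_le_left _ _)).trans
      (norm_le_norm_rademacherEmbedding t L u)
  · calc min 1 (β / 2) * ‖u‖ ≤ β / 2 * ‖rademacherEmbedding t L u‖ :=
          mul_le_mul (min_le_right _ _) (norm_le_norm_rademacherEmbedding t L u) (norm_nonneg _)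
            (by positivity)
      _ ≤ ‖T (rademacherEmbedding t L u)‖ :=
          mul_norm_le_norm_apply T (isOpen_cylinder _ t L)
            (fun s hs => ⟨hdiag s (hsub hs), hsmall s hs⟩)
            (support_rademacherEmbedding_subset t L u)

end

/-- There is a real Banach space `X` such that every nonzero dissipative operator on `X` fixes
a copy of `ℓ₁`, while on the dual `X*` there is an infinite linearly independent family of
finite-rank dissipative operators. -/
theorem exists_banach_dissipative_fix_l1_but_dual_infinite_finiteRank_dissipative :
    ∃ (X : Type) (_ : NormedAddCommGroup X) (_ : NormedSpace ℝ X) (_ : CompleteSpace X),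
      (∀ T : X →L[ℝ] X, T ≠ 0 → (∀ lam ∈ numericalRange ℝ T, lam ≤ 0) →
        ∃ (J : lp (fun _ : ℕ => ℝ) 1 →L[ℝ] X) (c : ℝ), 0 < c ∧
          ∀ u : lp (fun _ : ℕ => ℝ) 1, c * ‖u‖ ≤ ‖J u‖ ∧ c * ‖u‖ ≤ ‖T (J u)‖) ∧
      ∃ S : ℕ → (StrongDual ℝ X →L[ℝ] StrongDual ℝ X),
        LinearIndependent ℝ S ∧
        ∀ n : ℕ, FiniteDimensional ℝ ↥(LinearMap.range ((S n) : StrongDual ℝ X →ₗ[ℝ]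
            StrongDual ℝ X)) ∧
          ∀ lam ∈ numericalRange ℝ (S n), lam ≤ 0 := by
  have hp : Injective fun n (i : ℕ) => decide (i = n) := fun m n h =>
    (by simpa using congrFun h n : n = m).symm
  exact ⟨C(ℕ → Bool, ℝ), inferInstance, inferInstance, inferInstance,
    fun _ hT₀ hT => exists_lpOne_embedding_of_dissipative hT₀ hT,
    fun n => negAtomicPart fun i => decide (i = n), linearIndependent_negAtomicPart hp,
    fun _ => ⟨finiteDimensional_range_smulRight _ _, numericalRange_negAtomicPart_nonpos _⟩⟩
end
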